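/- arXiv:2303.08549 — 2 statements merged into one kernel-verified Lean document; each statement's English description precedes it below -/
import Mathlib

section
/- Under the standing assumptions, consider one NBK step at (x_k, x_k*) with index i_k and suppose f_{i_k}(x_k) ≠ 0 and ∇f_{i_k}(x_k) ≠ 0. Then the step size t_k used by the method satisfies sign(t_k) = sign(f_{i_k}(x_k)); i.e., this holds both for the relaxed step size t_{k,σ} = σ f_{i_k}(x_k)/‖∇f_{i_k}(x_k)‖_*² and, when H_k ∩ dom ∂φ ≠ ∅, for any minimizer t_{k,φ} of t ↦ φ*(x_k* − t∇f_{i_k}(x_k)) + tβ_k with β_k = ⟨∇f_{i_k}(x_k), x_k⟩ − f_{i_k}(x_k). -/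
open Set Filter Topology MeasureTheory ProbabilityTheory

noncomputable section

abbrev Euc (d : ℕ) := EuclideanSpace ℝ (Fin d)

/-- Real inner product on `ℝ^d`. -/
def rinn {d : ℕ} (x y : Euc d) : ℝ := inner ℝ x y

/-- Effective domain of an extended-real-valued function. -/
def edom {d : ℕ} (φ : Euc d → EReal) : Set (Euc d) := {x | φ x ≠ ⊤}

/-- Convex subdifferential. -/
def subdiff {d : ℕ} (φ : Euc d → EReal) (x : Euc d) : Set (Euc d) :=
  {u | φ x ≠ ⊤ ∧ ∀ y : Euc d, φ x + ((rinn u (y - x) : ℝ) : EReal) ≤ φ y}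

/-- Domain of the subdifferential. -/
def ddom {d : ℕ} (φ : Euc d → EReal) : Set (Euc d) := {x | (subdiff φ x).Nonempty}

/-- Bregman distance `D_φ^{u}(x,y) = φ(y) - φ(x) - ⟨u, y - x⟩`. -/
def breg {d : ℕ} (φ : Euc d → EReal) (u x y : Euc d) : EReal :=
  φ y - φ x - ((rinn u (y - x) : ℝ) : EReal)

/-- Fenchel conjugate (extended-real-valued). -/
def econj {d : ℕ} (φ : Euc d → EReal) (u : Euc d) : EReal :=
  ⨆ x : Euc d, ((rinn u x : ℝ) : EReal) - φ x

/-- Real-valued Fenchel conjugate (under the standing assumptions `econj` is finite). -/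
def rconj {d : ℕ} (φ : Euc d → EReal) (u : Euc d) : ℝ := (econj φ u).toReal

/-- Gradient `∇φ*` of the conjugate. -/
def gradconj {d : ℕ} (φ : Euc d → EReal) (u : Euc d) : Euc d := gradient (rconj φ) u

def ConvexE {d : ℕ} (φ : Euc d → EReal) : Prop :=
  ∀ x y : Euc d, ∀ t : ℝ, 0 < t → t < 1 →
    φ (t • x + (1 - t) • y) ≤ (t : EReal) * φ x + ((1 - t : ℝ) : EReal) * φ y

def StrictConvexOnE {d : ℕ} (φ : Euc d → EReal) (s : Set (Euc d)) : Prop :=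
  ∀ x ∈ s, ∀ y ∈ s, x ≠ y → ∀ t : ℝ, 0 < t → t < 1 →
    φ (t • x + (1 - t) • y) < (t : EReal) * φ x + ((1 - t : ℝ) : EReal) * φ y

def ProperE {d : ℕ} (φ : Euc d → EReal) : Prop :=
  (∃ x, φ x ≠ ⊤) ∧ ∀ x, φ x ≠ ⊥

/-- `φ(x)/‖x‖ → ∞` as `‖x‖ → ∞`. -/
def Supercoercive {d : ℕ} (φ : Euc d → EReal) : Prop :=
  ∀ M : ℝ, ∃ R : ℝ, ∀ x : Euc d, R ≤ ‖x‖ → ((M * ‖x‖ : ℝ) : EReal) ≤ φ x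

/-- Essential strict convexity: strict convexity on the relative interior of the domain. -/
def EssStrictConvexE {d : ℕ} (φ : Euc d → EReal) : Prop :=
  StrictConvexOnE φ (intrinsicInterior ℝ (edom φ))

/-- Standing assumptions on the distance generating function `φ` and constraint set `C`. -/
structure PhiAssump {d : ℕ} (φ : Euc d → EReal) (C : Set (Euc d)) : Prop where
  Cne : C.Nonempty
  Cconv : Convex ℝ C
  Ccl : IsClosed C
  proper : ProperE φ
  conv : ConvexE φ
  lsc : LowerSemicontinuous φ
  coercive : Supercoercive φ
  essstrict : EssStrictConvexE φ
  domC : closure (ddom φ) = C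
  ri_eq : ddom φ = intrinsicInterior ℝ (edom φ)

/-- Standing assumption (iv): Bregman distances tend to zero along convergent sequences. -/
def BregCont {d : ℕ} (φ : Euc d → EReal) : Prop :=
  ∀ x ∈ edom φ, ∀ xk : ℕ → Euc d, ∀ uk : ℕ → Euc d,
    (∀ k, uk k ∈ subdiff φ (xk k)) → Tendsto xk atTop (𝓝 x) →
    Tendsto (fun k => breg φ (uk k) (xk k) x) atTop (𝓝 (0 : EReal))

/-- `f` is continuously differentiable on `Dset ⊇ C`, with gradients `f'`. -/
structure FAssump {d n : ℕ} (f : Fin n → Euc d → ℝ) (f' : Fin n → Euc d → Euc d)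
    (Dset C : Set (Euc d)) : Prop where
  CsubD : C ⊆ Dset
  grad : ∀ i, ∀ x ∈ Dset, HasGradientAt (f i) (f' i x) x
  cont : ∀ i, ContinuousOn (f' i) Dset

/-- Solution set `S = C ∩ f⁻¹(0)`. -/
def solSet {d n : ℕ} (f : Fin n → Euc d → ℝ) (C : Set (Euc d)) : Set (Euc d) :=
  {x ∈ C | ∀ i, f i x = 0}

/-- `N` is a norm on `ℝ^d`. -/
def IsANorm {d : ℕ} (N : Euc d → ℝ) : Prop :=
  (∀ x, N x = 0 ↔ x = 0) ∧ (∀ (c : ℝ) (x : Euc d), N (c • x) = |c| * N x) ∧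
    ∀ x y : Euc d, N (x + y) ≤ N x + N y

/-- Dual norm of `N`. -/
def dualN {d : ℕ} (N : Euc d → ℝ) (u : Euc d) : ℝ :=
  sSup {r : ℝ | ∃ y : Euc d, N y ≤ 1 ∧ r = (rinn u y)}

/-- `φ` is `σ`-strongly convex w.r.t. the norm `N`. -/
def StronglyConvexWrt {d : ℕ} (φ : Euc d → EReal) (σ : ℝ) (N : Euc d → ℝ) : Prop :=
  ∀ x ∈ ddom φ, ∀ y ∈ ddom φ, ∀ u ∈ subdiff φ x,
    ((σ / 2 * (N (x - y)) ^ 2 : ℝ) : EReal) ≤ breg φ u x y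

/-- `φ` is `M`-smooth w.r.t. the norm `N`: finite everywhere (subdifferentiable everywhere)
with the quadratic upper bound. -/
def SmoothWrt {d : ℕ} (φ : Euc d → EReal) (M : ℝ) (N : Euc d → ℝ) : Prop :=
  (∀ x : Euc d, (subdiff φ x).Nonempty) ∧
    ∀ x y : Euc d, ∀ u ∈ subdiff φ x,
      breg φ u x y ≤ ((M / 2 * (N (x - y)) ^ 2 : ℝ) : EReal)

/-- `g` (with gradient `g'`) is star-convex. -/
def StarConvexWith {d : ℕ} (g : Euc d → ℝ) (g' : Euc d → Euc d) : Prop :=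
  (∃ z : Euc d, ∀ y, g z ≤ g y) ∧
    ∀ x z : Euc d, (∀ y, g z ≤ g y) → g x + rinn (g' x) (z - x) ≤ g z

/-- `g` (with gradient `g'`) is strictly star-convex. -/
def StrictStarConvexWith {d : ℕ} (g : Euc d → ℝ) (g' : Euc d → Euc d) : Prop :=
  (∃ z : Euc d, ∀ y, g z ≤ g y) ∧
    ∀ x z : Euc d, (∀ y, g z ≤ g y) → x ≠ z → g x + rinn (g' x) (z - x) < g z

/-- `g` is `μ`-strongly star-convex relative to `φ`. -/
def StronglyStarConvexRel {d : ℕ} (g : Euc d → ℝ) (g' : Euc d → Euc d) (μ : ℝ)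
    (φ : Euc d → EReal) : Prop :=
  (∃ z : Euc d, ∀ y, g z ≤ g y) ∧
    ∀ x : Euc d, ∀ u ∈ subdiff φ x, ∀ z : Euc d, (∀ y, g z ≤ g y) →
      ((g x + rinn (g' x) (z - x) : ℝ) : EReal) + (μ : EReal) * breg φ u x z ≤ (g z : EReal)

def IsAffineF {d : ℕ} (g : Euc d → ℝ) : Prop :=
  ∃ (a : Euc d) (b : ℝ), ∀ x, g x = (rinn a x) + b

/-- Assumption 2: each component is either nonnegative star-convex with a zero in `dom ∂φ`,
nonnegative strictly star-convex, or affine. -/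
def Assump2 {d n : ℕ} (φ : Euc d → EReal) (f : Fin n → Euc d → ℝ)
    (f' : Fin n → Euc d → Euc d) : Prop :=
  ∀ i : Fin n,
    ((∀ x, 0 ≤ f i x) ∧ StarConvexWith (f i) (f' i) ∧ ∃ z ∈ ddom φ, f i z = 0) ∨
    ((∀ x, 0 ≤ f i x) ∧ StrictStarConvexWith (f i) (f' i)) ∨
    IsAffineF (f i)

/-- `g` is `L`-smooth w.r.t. the norm `N` (quadratic upper bound). -/
def LSmoothWrt {d : ℕ} (g : Euc d → ℝ) (g' : Euc d → Euc d) (L : ℝ) (N : Euc d → ℝ) : Prop :=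
  ∀ x y : Euc d, g y ≤ g x + rinn (g' x) (y - x) + L / 2 * (N (x - y)) ^ 2

/-- Hyperplane given by the linearization of `f i` at `x`. -/
def linHyp {d n : ℕ} (f : Fin n → Euc d → ℝ) (f' : Fin n → Euc d → Euc d)
    (i : Fin n) (x : Euc d) : Set (Euc d) :=
  {y | f i x + rinn (f' i x) (y - x) = 0}

/-- Objective of the one-dimensional dual problem defining the exact NBK step size. -/
def lineObj {d n : ℕ} (φ : Euc d → EReal) (f : Fin n → Euc d → ℝ)
    (f' : Fin n → Euc d → Euc d) (i : Fin n) (x u : Euc d) (t : ℝ) : ℝ :=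
  rconj φ (u - t • f' i x) + t * (rinn (f' i x) x - f i x)

/-- Local tangential cone condition with constant `η` on `U`. -/
def TCCOn {d : ℕ} (g : Euc d → ℝ) (g' : Euc d → Euc d) (η : ℝ) (U : Set (Euc d)) : Prop :=
  ∀ x ∈ U, ∀ y ∈ U, |g x + rinn (g' x) (y - x) - g y| ≤ η * |g x - g y|

/-- The set `B_{r,φ}(z)`. -/
def BregBall {d : ℕ} (φ : Euc d → EReal) (C : Set (Euc d)) (r : ℝ) (z : Euc d) :
    Set (Euc d) :=
  {x ∈ C | ∀ u ∈ subdiff φ x, breg φ u x z ≤ (r : EReal)}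

end

/-!
The relaxed step size is a positive multiple of `f_i(x)` because the dual norm of a nonzero
vector is positive. For the exact step size, write `g(t) = φ*(u - t a) + t β` with
`a = ∇f_i(x)` and `β = ⟨a, x⟩ - f_i(x)`. Fenchel–Young at `x` gives
`g(t) ≥ g(0) - t f_i(x)`, so a minimizer `t` satisfies `t f_i(x) ≥ 0`, and it remains to see
that `0` is not a minimizer. That is a one-sided derivative estimate for `φ*` at `u`:
near-maximizers of `⟨u - s a, ·⟩ - φ` for `s → 0⁺` stay bounded by supercoercivity, and every
cluster point `y` has zero Bregman gap `D_φ^u(x, y)`, hence `u ∈ ∂φ(y)` and `y = x` by essential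
strict convexity.
-/

lemma Real.sign_eq_sign_of_mul_pos {a b : ℝ} (h : 0 < a * b) : Real.sign a = Real.sign b := by
  rcases pos_and_pos_or_neg_and_neg_of_mul_pos h with ⟨ha, hb⟩ | ⟨ha, hb⟩
  · rw [Real.sign_of_pos ha, Real.sign_of_pos hb]
  · rw [Real.sign_of_neg ha, Real.sign_of_neg hb]

namespace IsANorm

variable {d : ℕ} {N : Euc d → ℝ}

lemma map_zero (hN : IsANorm N) : N 0 = 0 := (hN.1 0).2 rfl

lemma nonneg (hN : IsANorm N) (x : Euc d) : 0 ≤ N x := by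
  have h := hN.2.2 x (-x)
  have hneg : N (-x) = N x := by simpa using hN.2.1 (-1) x
  rw [add_neg_cancel, hN.map_zero, hneg] at h
  linarith

lemma pos (hN : IsANorm N) {x : Euc d} (hx : x ≠ 0) : 0 < N x :=
  (hN.nonneg x).lt_of_ne fun h => hx ((hN.1 x).1 h.symm)

lemma convexOn (hN : IsANorm N) : ConvexOn ℝ univ N :=
  ⟨convex_univ, fun x _ y _ a b ha hb _ => by
    calc N (a • x + b • y) ≤ N (a • x) + N (b • y) := hN.2.2 _ _
      _ = a • N x + b • N y := by
        rw [hN.2.1, hN.2.1, abs_of_nonneg ha, abs_of_nonneg hb, smul_eq_mul, smul_eq_mul]⟩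

lemma continuous (hN : IsANorm N) : Continuous N :=
  hN.convexOn.locallyLipschitz.continuous

lemma exists_pos_mul_norm_le (hN : IsANorm N) : ∃ c > 0, ∀ x : Euc d, c * ‖x‖ ≤ N x := by
  rcases subsingleton_or_nontrivial (Euc d) with _ | _
  · exact ⟨1, one_pos, fun x => by simp [Subsingleton.elim x 0, hN.map_zero]⟩
  obtain ⟨z, hz, hmin⟩ := (isCompact_sphere (0 : Euc d) 1).exists_isMinOn
    (NormedSpace.sphere_nonempty.2 zero_le_one) hN.continuous.continuousOn
  have hz0 : z ≠ 0 := by rintro rfl; simp at hz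
  refine ⟨N z, hN.pos hz0, fun x => ?_⟩
  rcases eq_or_ne x 0 with rfl | hx
  · simp [hN.map_zero]
  have hxpos : 0 < ‖x‖ := norm_pos_iff.2 hx
  have hle : N z ≤ ‖x‖⁻¹ * N x := by
    have : N z ≤ N (‖x‖⁻¹ • x) := hmin (by simp [norm_smul, hx])
    rwa [hN.2.1, abs_of_pos (inv_pos.2 hxpos)] at this
  calc N z * ‖x‖ ≤ ‖x‖⁻¹ * N x * ‖x‖ := by gcongr
    _ = N x := by field_simp

lemma dualN_pos (hN : IsANorm N) {u : Euc d} (hu : u ≠ 0) : 0 < dualN N u := by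
  obtain ⟨c, hc, hle⟩ := hN.exists_pos_mul_norm_le
  have hbdd : BddAbove {r : ℝ | ∃ y : Euc d, N y ≤ 1 ∧ r = rinn u y} := by
    refine ⟨‖u‖ * (1 / c), ?_⟩
    rintro _ ⟨y, hy, rfl⟩
    have hyc : ‖y‖ ≤ 1 / c := by rw [le_div_iff₀ hc]; linarith [hle y]
    calc rinn u y ≤ ‖u‖ * ‖y‖ := real_inner_le_norm u y
      _ ≤ ‖u‖ * (1 / c) := by gcongr
  have hNu := hN.pos hu
  have hmem : ‖u‖ ^ 2 / N u ∈ {r : ℝ | ∃ y : Euc d, N y ≤ 1 ∧ r = rinn u y} := by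
    refine ⟨(N u)⁻¹ • u, ?_, ?_⟩
    · rw [hN.2.1, abs_of_pos (inv_pos.2 hNu), inv_mul_cancel₀ hNu.ne']
    · rw [rinn, real_inner_smul_right, real_inner_self_eq_norm_sq, div_eq_inv_mul]
  have hu' := norm_pos_iff.2 hu
  exact (by positivity : 0 < ‖u‖ ^ 2 / N u).trans_le (le_csSup hbdd hmem)

end IsANorm

section ConvexAnalysis

variable {d : ℕ} {φ : Euc d → EReal} {x y u v : Euc d}

lemma ProperE.exists_eq_coe (hφ : ProperE φ) (hx : φ x ≠ ⊤) : ∃ ρ : ℝ, φ x = ρ :=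
  ⟨(φ x).toReal, (EReal.coe_toReal hx (hφ.2 x)).symm⟩

lemma subdiff_le (hu : u ∈ subdiff φ x) {ρx ρy : ℝ} (hx : φ x = ρx) (hy : φ y = ρy) :
    ρx + rinn u (y - x) ≤ ρy := by
  have h := hu.2 y
  rwa [hx, hy, ← EReal.coe_add, EReal.coe_le_coe_iff] at h

lemma mem_subdiff_of_le (hφ : ProperE φ) {ρx : ℝ} (hx : φ x = ρx)
    (h : ∀ (y : Euc d) (ρy : ℝ), φ y = ρy → ρx + rinn u (y - x) ≤ ρy) : u ∈ subdiff φ x := by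
  refine ⟨by simp [hx], fun y => ?_⟩
  rcases eq_or_ne (φ y) ⊤ with hy | hy
  · simp [hy]
  obtain ⟨ρy, hy⟩ := hφ.exists_eq_coe hy
  rw [hx, hy, ← EReal.coe_add, EReal.coe_le_coe_iff]
  exact h y ρy hy

lemma breg_eq_coe {ρx ρy : ℝ} (hx : φ x = ρx) (hy : φ y = ρy) :
    breg φ u x y = ((ρy - ρx - rinn u (y - x) : ℝ) : EReal) := by
  rw [breg, hx, hy, EReal.coe_sub, EReal.coe_sub]

lemma lowerSemicontinuous_breg (hlsc : LowerSemicontinuous φ) {ρx : ℝ} (hx : φ x = ρx) :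
    LowerSemicontinuous (breg φ u x) := by
  have hg : Continuous fun y => ((-ρx - rinn u (y - x) : ℝ) : EReal) :=
    continuous_coe_real_ereal.comp (by unfold rinn; fun_prop)
  have hsum := hlsc.add' hg.lowerSemicontinuous fun y =>
    EReal.continuousAt_add (Or.inr (EReal.coe_ne_bot _)) (Or.inr (EReal.coe_ne_top _))
  convert hsum using 2 with y
  rw [breg, hx, sub_eq_add_neg, sub_eq_add_neg, add_assoc, sub_eq_add_neg (-ρx), EReal.coe_add,
    EReal.coe_neg, EReal.coe_neg]


lemma mem_subdiff_of_breg_nonpos (hφ : ProperE φ) (hu : u ∈ subdiff φ x)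
    (hy : breg φ u x y ≤ 0) : u ∈ subdiff φ y := by
  obtain ⟨ρx, hx⟩ := hφ.exists_eq_coe hu.1
  have hy_top : φ y ≠ ⊤ := fun h => by simp [breg, h, hx] at hy
  obtain ⟨ρy, hy'⟩ := hφ.exists_eq_coe hy_top
  rw [breg_eq_coe hx hy', EReal.coe_nonpos] at hy
  refine mem_subdiff_of_le hφ hy' fun z ρz hz => ?_
  have hxz := subdiff_le hu hx hz
  have hsplit : rinn u (z - x) = rinn u (y - x) + rinn u (z - y) := by
    simp only [rinn, ← inner_add_right, sub_add_sub_cancel']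
  linarith

lemma eq_of_mem_subdiff (hφ : ProperE φ) (hstrict : EssStrictConvexE φ)
    (hri : ddom φ = intrinsicInterior ℝ (edom φ)) (hx : u ∈ subdiff φ x)
    (hy : u ∈ subdiff φ y) : x = y := by
  by_contra hne
  obtain ⟨ρx, hρx⟩ := hφ.exists_eq_coe hx.1
  obtain ⟨ρy, hρy⟩ := hφ.exists_eq_coe hy.1
  set m : Euc d := (1 / 2 : ℝ) • x + (1 - 1 / 2 : ℝ) • y with hm
  have hlt := hstrict x (hri ▸ ⟨u, hx⟩) y (hri ▸ ⟨u, hy⟩) hne (1 / 2) (by norm_num) (by norm_num)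
  rw [← hm, hρx, hρy, ← EReal.coe_mul, ← EReal.coe_mul, ← EReal.coe_add] at hlt
  obtain ⟨ρm, hρm⟩ := hφ.exists_eq_coe (ne_top_of_lt hlt)
  rw [hρm, EReal.coe_lt_coe_iff] at hlt
  have hxm := subdiff_le hx hρx hρm
  have hym := subdiff_le hy hρy hρm
  have hcancel : rinn u (m - x) + rinn u (m - y) = 0 := by
    rw [rinn, rinn, ← inner_add_right, hm]
    convert inner_zero_right u using 2
    module
  linarith


lemma exists_mul_norm_sub_le_gap (hcoer : Supercoercive φ) (hu : u ∈ subdiff φ x) {ρx : ℝ}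
    (hx : φ x = ρx) (M : ℝ) :
    ∃ K : ℝ, ∀ (y : Euc d) (ρy : ℝ), φ y = ρy → M * ‖y‖ - K ≤ ρy - ρx - rinn u (y - x) := by
  obtain ⟨R, hR⟩ := hcoer (|M| + ‖u‖)
  refine ⟨|M| * |R| + |ρx| + ‖u‖ * ‖x‖, fun y ρy hy => ?_⟩
  have hsplit : rinn u (y - x) = rinn u y - rinn u x := inner_sub_right u y x
  have huy : rinn u y ≤ ‖u‖ * ‖y‖ := real_inner_le_norm u y
  have hux : |rinn u x| ≤ ‖u‖ * ‖x‖ := abs_real_inner_le_norm u x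
  have hM : M * ‖y‖ ≤ |M| * ‖y‖ := mul_le_mul_of_nonneg_right (le_abs_self M) (norm_nonneg y)
  rcases le_or_gt R ‖y‖ with hRy | hRy
  · have hρy := hR y hRy
    rw [hy, EReal.coe_le_coe_iff, add_mul] at hρy
    linarith [(abs_le.1 hux).1, le_abs_self ρx, mul_nonneg (abs_nonneg M) (abs_nonneg R)]
  · have hgap := subdiff_le hu hx hy
    have : |M| * ‖y‖ ≤ |M| * |R| := by gcongr; exact hRy.le.trans (le_abs_self R)
    linarith [abs_nonneg ρx, mul_nonneg (norm_nonneg u) (norm_nonneg x)]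

lemma econj_le_coe (hφ : ProperE φ) {c : ℝ}
    (h : ∀ (y : Euc d) (ρy : ℝ), φ y = ρy → rinn v y - ρy ≤ c) : econj φ v ≤ c := by
  refine iSup_le fun y => ?_
  rcases eq_or_ne (φ y) ⊤ with hy | hy
  · simp [hy]
  obtain ⟨ρy, hy⟩ := hφ.exists_eq_coe hy
  rw [hy, ← EReal.coe_sub, EReal.coe_le_coe_iff]
  exact h y ρy hy

lemma coe_le_econj {ρy : ℝ} (hy : φ y = ρy) : ((rinn v y - ρy : ℝ) : EReal) ≤ econj φ v := by
  rw [EReal.coe_sub, ← hy]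
  exact le_iSup (fun z => ((rinn v z : ℝ) : EReal) - φ z) y

lemma econj_eq_coe_rconj (hφ : ProperE φ) (hcoer : Supercoercive φ) (hu : u ∈ subdiff φ x)
    (v : Euc d) : econj φ v = rconj φ v := by
  obtain ⟨ρx, hx⟩ := hφ.exists_eq_coe hu.1
  obtain ⟨K, hK⟩ := exists_mul_norm_sub_le_gap hcoer hu hx ‖v - u‖
  have hle : econj φ v ≤ ((rinn u x - ρx + K : ℝ) : EReal) := by
    refine econj_le_coe hφ fun y ρy hy => ?_
    have hsplit : rinn v y = rinn (v - u) y + rinn u (y - x) + rinn u x := by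
      simp only [rinn, inner_sub_left, inner_sub_right]; ring
    have hvu : rinn (v - u) y ≤ ‖v - u‖ * ‖y‖ := real_inner_le_norm (v - u) y
    linarith [hK y ρy hy]
  have hge := coe_le_econj (v := v) hx
  exact (EReal.coe_toReal (ne_top_of_le_ne_top (EReal.coe_ne_top _) hle)
    (ne_bot_of_le_ne_bot (EReal.coe_ne_bot _) hge)).symm


lemma inner_sub_le_rconj (hφ : ProperE φ) (hcoer : Supercoercive φ) (hu : u ∈ subdiff φ x)
    {ρy : ℝ} (hy : φ y = ρy) : rinn v y - ρy ≤ rconj φ v := by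
  have h := coe_le_econj (v := v) hy
  rwa [econj_eq_coe_rconj hφ hcoer hu, EReal.coe_le_coe_iff] at h

lemma rconj_eq_of_mem_subdiff (hφ : ProperE φ) (hcoer : Supercoercive φ)
    (hu : u ∈ subdiff φ x) {ρx : ℝ} (hx : φ x = ρx) : rconj φ u = rinn u x - ρx := by
  refine le_antisymm ?_ (inner_sub_le_rconj hφ hcoer hu hx)
  have h : econj φ u ≤ ((rinn u x - ρx : ℝ) : EReal) := econj_le_coe hφ fun y ρy hy => by
    have hsplit : rinn u (y - x) = rinn u y - rinn u x := inner_sub_right u y x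
    linarith [subdiff_le hu hx hy]
  rwa [econj_eq_coe_rconj hφ hcoer hu, EReal.coe_le_coe_iff] at h

lemma exists_lt_inner_sub_of_lt_rconj (hφ : ProperE φ) (hcoer : Supercoercive φ)
    (hu : u ∈ subdiff φ x) {c : ℝ} (hc : c < rconj φ v) :
    ∃ (y : Euc d) (ρy : ℝ), φ y = ρy ∧ c < rinn v y - ρy := by
  rw [← EReal.coe_lt_coe_iff, ← econj_eq_coe_rconj hφ hcoer hu, econj, lt_iSup_iff] at hc
  obtain ⟨y, hy⟩ := hc
  have hy_top : φ y ≠ ⊤ := fun h => by simp [h] at hy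
  obtain ⟨ρy, hρy⟩ := hφ.exists_eq_coe hy_top
  rw [hρy, ← EReal.coe_sub, EReal.coe_lt_coe_iff] at hy
  exact ⟨y, ρy, hρy, hy⟩

variable {C : Set (Euc d)}

lemma eq_of_tendsto_gap (hφ : PhiAssump φ C) (hu : u ∈ subdiff φ x) {ρx : ℝ} (hx : φ x = ρx)
    {ys : ℕ → Euc d} {ρs : ℕ → ℝ} (hρs : ∀ n, φ (ys n) = ρs n) {y₀ : Euc d}
    (hys : Tendsto ys atTop (𝓝 y₀))
    (hgap : Tendsto (fun n => ρs n - ρx - rinn u (ys n - x)) atTop (𝓝 0)) : x = y₀ := by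
  have hbreg : breg φ u x y₀ ≤ 0 := by
    refine EReal.le_of_forall_lt_iff_le.1 fun ε hε => ?_
    have hclosed := (lowerSemicontinuous_breg hφ.lsc hx (u := u)).isClosed_preimage ε
    refine hclosed.mem_of_tendsto hys ?_
    filter_upwards [hgap.eventually (gt_mem_nhds (EReal.coe_pos.1 hε))] with n hn
    rw [Set.mem_preimage, Set.mem_Iic, breg_eq_coe hx (hρs n), EReal.coe_le_coe_iff]
    exact hn.le
  exact eq_of_mem_subdiff hφ.proper hφ.essstrict hφ.ri_eq hu
    (mem_subdiff_of_breg_nonpos hφ.proper hu hbreg)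


lemma exists_gap_le_of_rconj_le (hφ : ProperE φ) (hcoer : Supercoercive φ)
    (hu : u ∈ subdiff φ x) {ρx : ℝ} (hx : φ x = ρx) {a : Euc d} {β s : ℝ} (hs : 0 < s)
    (hmin : rconj φ u ≤ rconj φ (u - s • a) + s * β) :
    ∃ (y : Euc d) (ρy : ℝ), φ y = ρy ∧
      ρy - ρx - rinn u (y - x) ≤ s * (β + s - rinn a y) := by
  -- the conjugate need not be attained; an error `s ^ 2 = o(s)` is harmless
  obtain ⟨y, ρy, hy, hlt⟩ := exists_lt_inner_sub_of_lt_rconj (c := rconj φ (u - s • a) - s ^ 2)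
    hφ hcoer hu (sub_lt_self _ (by positivity))
  refine ⟨y, ρy, hy, ?_⟩
  have hux := rconj_eq_of_mem_subdiff hφ hcoer hu hx
  have h1 : rinn (u - s • a) y = rinn u y - s * rinn a y := by
    simp only [rinn, inner_sub_left, real_inner_smul_left]
  have h2 : rinn u (y - x) = rinn u y - rinn u x := inner_sub_right u y x
  rw [mul_sub, mul_add, ← sq]
  linarith

lemma inner_le_of_forall_rconj_le (hφ : PhiAssump φ C) (hu : u ∈ subdiff φ x) {a : Euc d}
    {β : ℝ} (hmin : ∀ s : ℝ, 0 < s → rconj φ u ≤ rconj φ (u - s • a) + s * β) :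
    rinn a x ≤ β := by
  obtain ⟨ρx, hx⟩ := hφ.proper.exists_eq_coe hu.1
  set s : ℕ → ℝ := fun n => 1 / ((n : ℝ) + 1) with hs_def
  have hs_pos : ∀ n, 0 < s n := fun n => by positivity
  have hs_le : ∀ n, s n ≤ 1 := fun n => by
    rw [hs_def, div_le_one (by positivity)]; linarith [n.cast_nonneg (α := ℝ)]
  choose y ρ hρ hgap_le using fun n =>
    exists_gap_le_of_rconj_le hφ.proper hφ.coercive hu hx (hs_pos n) (hmin (s n) (hs_pos n))
  have hgap_nonneg : ∀ n, 0 ≤ ρ n - ρx - rinn u (y n - x) := fun n => by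
    linarith [subdiff_le hu hx (hρ n)]
  have hay : ∀ n, 0 ≤ β + s n - rinn a (y n) := fun n =>
    (mul_nonneg_iff_of_pos_left (hs_pos n)).1 ((hgap_nonneg n).trans (hgap_le n))
  obtain ⟨K, hK⟩ := exists_mul_norm_sub_le_gap hφ.coercive hu hx (‖a‖ + 1)
  have hbdd : ∀ n, ‖y n‖ ≤ K + |β| + 1 := by
    intro n
    have h1 := hK (y n) (ρ n) (hρ n)
    have h2 := mul_le_of_le_one_left (hay n) (hs_le n)
    have h3 : -(‖a‖ * ‖y n‖) ≤ rinn a (y n) := (abs_le.1 (abs_real_inner_le_norm a (y n))).1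
    rw [add_mul, one_mul] at h1
    linarith [hgap_le n, le_abs_self β, hs_le n]
  obtain ⟨y₀, -, ψ, hψ, hlim⟩ := tendsto_subseq_of_bounded (Metric.isBounded_closedBall)
    fun n => mem_closedBall_zero_iff.2 (hbdd n)
  have hs_lim : Tendsto (s ∘ ψ) atTop (𝓝 0) :=
    tendsto_one_div_add_atTop_nhds_zero_nat.comp hψ.tendsto_atTop
  have hgap_lim : Tendsto (fun k => ρ (ψ k) - ρx - rinn u (y (ψ k) - x)) atTop (𝓝 0) := by
    refine squeeze_zero (fun k => hgap_nonneg _) (fun k => (hgap_le (ψ k)).trans ?_)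
      (by simpa using hs_lim.mul_const (|β| + 1 + ‖a‖ * (K + |β| + 1)))
    have h3 : -(‖a‖ * ‖y (ψ k)‖) ≤ rinn a (y (ψ k)) :=
      (abs_le.1 (abs_real_inner_le_norm a (y (ψ k)))).1
    have h4 : ‖a‖ * ‖y (ψ k)‖ ≤ ‖a‖ * (K + |β| + 1) := by gcongr; exact hbdd _
    refine mul_le_mul_of_nonneg_left ?_ (hs_pos _).le
    linarith [le_abs_self β, hs_le (ψ k)]
  have hx₀ := eq_of_tendsto_gap hφ hu hx (fun k => hρ (ψ k)) hlim hgap_lim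
  subst hx₀
  have hβ : Tendsto (fun k => β + s (ψ k)) atTop (𝓝 β) := by
    simpa using tendsto_const_nhds.add hs_lim
  exact le_of_tendsto_of_tendsto (tendsto_const_nhds.inner hlim) hβ
    (Eventually.of_forall fun k => show rinn a (y (ψ k)) ≤ β + s (ψ k) by linarith [hay (ψ k)])

end ConvexAnalysis

section LineObjective

variable {d n : ℕ} {φ : Euc d → EReal} {C : Set (Euc d)} {f : Fin n → Euc d → ℝ}
  {f' : Fin n → Euc d → Euc d} {i : Fin n} {x u : Euc d}

lemma lineObj_zero : lineObj φ f f' i x u 0 = rconj φ u := by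
  simp [lineObj]

lemma lineObj_zero_sub_le (hφ : ProperE φ) (hcoer : Supercoercive φ) (hu : u ∈ subdiff φ x)
    (s : ℝ) : lineObj φ f f' i x u 0 - s * f i x ≤ lineObj φ f f' i x u s := by
  obtain ⟨ρx, hx⟩ := hφ.exists_eq_coe hu.1
  have h1 := inner_sub_le_rconj hφ hcoer hu hx (v := u - s • f' i x)
  have h2 := rconj_eq_of_mem_subdiff hφ hcoer hu hx
  have h3 : rinn (u - s • f' i x) x = rinn u x - s * rinn (f' i x) x := by
    simp only [rinn, inner_sub_left, real_inner_smul_left]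
  rw [lineObj_zero, lineObj]
  linarith

lemma eq_zero_of_forall_lineObj_zero_le (hφ : PhiAssump φ C) (hu : u ∈ subdiff φ x)
    (hmin : ∀ s, lineObj φ f f' i x u 0 ≤ lineObj φ f f' i x u s) : f i x = 0 := by
  have hle := inner_le_of_forall_rconj_le hφ hu (a := f' i x)
    (β := rinn (f' i x) x - f i x) fun s _ => by simpa [lineObj] using hmin s
  have hge := inner_le_of_forall_rconj_le hφ hu (a := -f' i x)
    (β := -(rinn (f' i x) x - f i x)) fun s _ => by
      have h := hmin (-s)
      simp only [lineObj, zero_smul, sub_zero, zero_mul, add_zero, neg_smul, smul_neg] at h ⊢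
      linarith
  simp only [rinn, inner_neg_left] at hle hge
  linarith

lemma sign_eq_of_forall_lineObj_le (hφ : PhiAssump φ C) (hu : u ∈ subdiff φ x)
    (hf0 : f i x ≠ 0) {t : ℝ} (ht : ∀ s, lineObj φ f f' i x u t ≤ lineObj φ f f' i x u s) :
    Real.sign t = Real.sign (f i x) := by
  have ht0 : t ≠ 0 := by
    rintro rfl
    exact hf0 (eq_zero_of_forall_lineObj_zero_le hφ hu ht)
  have hle := (lineObj_zero_sub_le hφ.proper hφ.coercive hu t).trans (ht 0)
  have hnonneg : 0 ≤ t * f i x := by linarith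
  exact Real.sign_eq_sign_of_mul_pos (hnonneg.lt_of_ne (mul_ne_zero ht0 hf0).symm)

end LineObjective

theorem statement2_general {d n : ℕ} (φ : Euc d → EReal) (C : Set (Euc d))
    (f : Fin n → Euc d → ℝ) (f' : Fin n → Euc d → Euc d)
    (hφ : PhiAssump φ C)
    (σ : ℝ) (hσ : 0 < σ) (N : Euc d → ℝ) (hN : IsANorm N)
    (x u : Euc d) (hu : u ∈ subdiff φ x)
    (i : Fin n) (hf0 : f i x ≠ 0) (hf'0 : f' i x ≠ 0) :
    Real.sign (σ * f i x / (dualN N (f' i x)) ^ 2) = Real.sign (f i x) ∧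
    ((linHyp f f' i x ∩ ddom φ).Nonempty →
      ∀ t : ℝ, (∀ s : ℝ, lineObj φ f f' i x u t ≤ lineObj φ f f' i x u s) →
        Real.sign t = Real.sign (f i x)) := by
  refine ⟨Real.sign_eq_sign_of_mul_pos ?_, fun _ t ht => sign_eq_of_forall_lineObj_le hφ hu hf0 ht⟩
  have hdual := hN.dualN_pos hf'0
  have hf_sq : 0 < f i x ^ 2 := by positivity
  rw [div_mul_eq_mul_div, mul_assoc, ← sq]
  positivity

/-- sign of the NBK step size equals the sign of `f_{i_k}(x_k)`. -/
theorem statement2 {d n : ℕ} (φ : Euc d → EReal) (C Dset : Set (Euc d))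
    (f : Fin n → Euc d → ℝ) (f' : Fin n → Euc d → Euc d)
    (hφ : PhiAssump φ C) (hf : FAssump f f' Dset C) (hS : (solSet f C).Nonempty)
    (σ : ℝ) (hσ : 0 < σ) (N : Euc d → ℝ) (hN : IsANorm N)
    (x u : Euc d) (hu : u ∈ subdiff φ x) (hxg : x = gradconj φ u)
    (i : Fin n) (hf0 : f i x ≠ 0) (hf'0 : f' i x ≠ 0) :
    Real.sign (σ * f i x / (dualN N (f' i x)) ^ 2) = Real.sign (f i x) ∧
    ((linHyp f f' i x ∩ ddom φ).Nonempty →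
      ∀ t : ℝ, (∀ s : ℝ, lineObj φ f f' i x u t ≤ lineObj φ f f' i x u s) →
        Real.sign t = Real.sign (f i x)) :=
  statement2_general φ C f f' hφ σ hσ N hN x u hu i hf0 hf'0
end

section
/- Under the standing assumptions and Assumption 2, let (x_{k+1}, x_{k+1}*) be obtained from (x_k, x_k*) by one NBK step with index i_k (with f_{i_k}(x_k) ≠ 0 and ∇f_{i_k}(x_k) ≠ 0). Then for every solution x̂ ∈ S = C ∩ f^{-1}(0) it holds that D_φ^{x_{k+1}*}(x_{k+1}, x̂) ≤ D_φ^{x_k*}(x_k, x̂) − D_φ^{x_k*}(x_k, x_{k+1}). -/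
open Set Filter Topology MeasureTheory ProbabilityTheory

/-! Supercoercivity and lower semicontinuity make the supremum defining `φ*(v)` attained, and
essential strict convexity makes the maximizer `y` (the point with `v ∈ ∂φ(y)`) unique. Since the
graph of `∂φ` is closed and maximizers stay bounded locally in `v`, the maximizer depends
continuously on `v`; squeezing `φ*(v') - φ*(v) - ⟨y, v' - v⟩` between `0` and
`⟨v' - v, y' - y⟩` then shows that `φ*` is differentiable with `∇φ*(v) = y`. So
`x_{k+1}* ∈ ∂φ(x_{k+1})`, and the first-order condition for the exact step size puts `x_{k+1}`
on the hyperplane where the linearization of `f_i` at `x_k` vanishes, while comparing with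
`t = 0` gives `t_k f_i(x_k) ≥ 0`. The three-point identity writes
`D(x_{k+1}, x̂) = D(x_k, x̂) - D(x_k, x_{k+1}) + t_k (f_i(x_k) + ⟨∇f_i(x_k), x̂ - x_k⟩)`, and
under Assumption 2 the linearization at a zero `x̂` is `≤ 0` with `f_i(x_k) > 0` (star-convex
cases) or `= 0` (affine case), so the last term is nonpositive. -/

open InnerProductSpace

lemma rinn_sub_right {d : ℕ} (v a b : Euc d) : rinn v (a - b) = rinn v a - rinn v b :=
  inner_sub_right v a b

lemma mapClusterPt_prodMk_of_mapClusterPt {X Y : Type*} [TopologicalSpace X] [TopologicalSpace Y]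
    {F : X → Y} {x : X} {y : Y} (h : MapClusterPt y (𝓝 x) F) :
    MapClusterPt (x, y) (𝓝 x) fun x' => (x', F x') := by
  rw [((𝓝 x).basis_sets.prod_nhds (𝓝 y).basis_sets).mapClusterPt_iff_frequently]
  rintro ⟨s, t⟩ ⟨hs, ht⟩
  exact (h.frequently ht).and_eventually hs |>.mono fun x' hx' => ⟨hx'.2, hx'.1⟩

section Conjugate

variable {d : ℕ} {φ : Euc d → EReal}

lemma ProperE.coe_toReal (hp : ProperE φ) {x : Euc d} (hx : φ x ≠ ⊤) :
    ((φ x).toReal : EReal) = φ x :=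
  EReal.coe_toReal hx (hp.2 x)

lemma ProperE.toReal_add_inner_le (hp : ProperE φ) {v y w : Euc d} (hv : v ∈ subdiff φ y)
    (hw : φ w ≠ ⊤) : (φ y).toReal + rinn v (w - y) ≤ (φ w).toReal := by
  have h := hv.2 w
  rw [← hp.coe_toReal hv.1, ← hp.coe_toReal hw] at h
  exact_mod_cast h

lemma ProperE.mem_subdiff_of_forall_sub_le (hp : ProperE φ) {v y : Euc d} (hy : φ y ≠ ⊤)
    (h : ∀ w, φ y - (rinn v y : EReal) ≤ φ w - (rinn v w : EReal)) : v ∈ subdiff φ y := by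
  refine ⟨hy, fun w => ?_⟩
  rcases eq_or_ne (φ w) ⊤ with hw | hw
  · simp [hw]
  have hvw := h w
  rw [← hp.coe_toReal hy, ← hp.coe_toReal hw] at hvw ⊢
  norm_cast at hvw ⊢
  linarith [rinn_sub_right v w y]

lemma Supercoercive.exists_norm_add_inner_le (hsc : Supercoercive φ) (M : ℝ) :
    ∃ R, ∀ v w : Euc d, ‖v‖ + 1 ≤ M → R ≤ ‖w‖ → ((‖w‖ + rinn v w : ℝ) : EReal) ≤ φ w := by
  obtain ⟨R, hR⟩ := hsc M
  refine ⟨R, fun v w hv hw => le_trans ?_ (hR w hw)⟩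
  have hw0 : 0 ≤ ‖w‖ := norm_nonneg w
  have hinner : rinn v w ≤ ‖v‖ * ‖w‖ := real_inner_le_norm v w
  exact_mod_cast (by nlinarith : ‖w‖ + rinn v w ≤ M * ‖w‖)

theorem exists_mem_subdiff (hp : ProperE φ) (hlsc : LowerSemicontinuous φ)
    (hsc : Supercoercive φ) (v : Euc d) : ∃ y, v ∈ subdiff φ y := by
  obtain ⟨x₀, hx₀⟩ := hp.1
  obtain ⟨R, hR⟩ := hsc.exists_norm_add_inner_le (‖v‖ + 1)
  set ψ : Euc d → EReal := fun w => φ w - (rinn v w : EReal)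
  set c : ℝ := (φ x₀).toReal - rinn v x₀
  have hψx₀ : ψ x₀ = c := by simp only [ψ, c, EReal.coe_sub, hp.coe_toReal hx₀]
  have hψ : LowerSemicontinuous ψ := by
    refine hlsc.add' (Continuous.lowerSemicontinuous ?_) fun w =>
      EReal.continuousAt_add (Or.inr ?_) (Or.inl (hp.2 w))
    · exact continuous_neg.comp (EReal.continuous_coe_iff.2 (continuous_const.inner continuous_id))
    · simp
  set K := Metric.closedBall (0 : Euc d) (max R (max ‖x₀‖ c))
  have hx₀K : x₀ ∈ K := by simp [K]
  obtain ⟨y, -, hy⟩ := (hψ.lowerSemicontinuousOn K).exists_isMinOn ⟨x₀, hx₀K⟩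
    (isCompact_closedBall _ _)
  have hmin : ∀ w, ψ y ≤ ψ w := by
    intro w
    by_cases hw : w ∈ K
    · exact hy hw
    have hw' : max R (max ‖x₀‖ c) < ‖w‖ := by simpa [K] using hw
    calc ψ y ≤ ψ x₀ := hy hx₀K
      _ = c := hψx₀
      _ ≤ ‖w‖ := by exact_mod_cast (le_max_right _ _).trans (le_max_right _ _) |>.trans hw'.le
      _ ≤ ψ w := by
        rw [EReal.le_sub_iff_add_le (by simp) (by simp)]
        exact_mod_cast hR v w le_rfl ((le_max_left _ _).trans hw'.le)
  refine ⟨y, hp.mem_subdiff_of_forall_sub_le ?_ hmin⟩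
  intro hyt
  have := (hmin x₀).trans hψx₀.le
  simp [ψ, hyt] at this

theorem eq_of_mem_subdiff_of_mem_subdiff (hp : ProperE φ) (hs : EssStrictConvexE φ)
    (hri : ddom φ ⊆ intrinsicInterior ℝ (edom φ)) {v y₁ y₂ : Euc d}
    (h₁ : v ∈ subdiff φ y₁) (h₂ : v ∈ subdiff φ y₂) : y₁ = y₂ := by
  by_contra hne
  set m : Euc d := (1 / 2 : ℝ) • y₁ + (1 - 1 / 2 : ℝ) • y₂
  have hlt := hs y₁ (hri ⟨v, h₁⟩) y₂ (hri ⟨v, h₂⟩) hne (1 / 2) (by norm_num) (by norm_num)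
  have hm : φ m ≠ ⊤ := ne_top_of_lt hlt
  rw [← hp.coe_toReal h₁.1, ← hp.coe_toReal h₂.1, ← hp.coe_toReal hm] at hlt
  norm_cast at hlt
  have hcancel : rinn v (m - y₁) + rinn v (m - y₂) = 0 := by
    simp only [m, rinn, inner_sub_right, inner_add_right, real_inner_smul_right]
    ring
  linarith [hp.toReal_add_inner_le h₁ hm, hp.toReal_add_inner_le h₂ hm]

theorem isClosed_setOf_mem_subdiff (hp : ProperE φ) (hlsc : LowerSemicontinuous φ) :
    IsClosed {p : Euc d × Euc d | p.1 ∈ subdiff φ p.2} := by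
  obtain ⟨x₀, hx₀⟩ := hp.1
  have hG : ∀ w, IsClosed {p : Euc d × Euc d | φ p.2 + (rinn p.1 (w - p.2) : EReal) ≤ φ w} := by
    intro w
    rcases eq_or_ne (φ w) ⊤ with hw | hw
    · simp [hw]
    have hcont : Continuous fun p : Euc d × Euc d =>
        (p.2, (((φ w).toReal - rinn p.1 (w - p.2) : ℝ) : EReal)) :=
      continuous_snd.prodMk (EReal.continuous_coe_iff.2 (continuous_const.sub
        (continuous_fst.inner (continuous_const.sub continuous_snd))))
    have hG_eq : {p : Euc d × Euc d | φ p.2 + (rinn p.1 (w - p.2) : EReal) ≤ φ w} =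
        (fun p : Euc d × Euc d => (p.2, (((φ w).toReal - rinn p.1 (w - p.2) : ℝ) : EReal))) ⁻¹'
          {q | φ q.1 ≤ q.2} := by
      ext p
      rw [Set.mem_preimage, Set.mem_ofPred_eq, Set.mem_ofPred_eq, EReal.coe_sub,
        hp.coe_toReal hw, EReal.le_sub_iff_add_le (by simp) (by simp)]
    rw [hG_eq]
    exact hlsc.isClosed_epigraph.preimage hcont
  convert isClosed_iInter hG using 1
  ext ⟨v, y⟩
  simp only [Set.mem_ofPred_eq, Set.mem_iInter]
  refine ⟨fun h => h.2, fun h => ⟨fun hy => ?_, h⟩⟩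
  exact hx₀ (by simpa [hy] using h x₀)

lemma eventually_mem_closedBall_of_forall_mem_subdiff (hp : ProperE φ) (hsc : Supercoercive φ)
    {Y : Euc d → Euc d} (hY : ∀ v, v ∈ subdiff φ (Y v)) (u : Euc d) :
    ∃ ρ, ∀ᶠ v in 𝓝 u, Y v ∈ Metric.closedBall (0 : Euc d) ρ := by
  obtain ⟨R, hR⟩ := hsc.exists_norm_add_inner_le (‖u‖ + 2)
  refine ⟨max R ((φ (Y u)).toReal + (‖u‖ + 1) * ‖Y u‖), ?_⟩
  filter_upwards [Metric.ball_mem_nhds u one_pos] with v hv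
  have hv' : ‖v‖ ≤ ‖u‖ + 1 := by
    have := norm_le_norm_add_norm_sub' v u
    rw [Metric.mem_ball, dist_eq_norm] at hv
    linarith
  rw [mem_closedBall_zero_iff]
  rcases lt_or_ge ‖Y v‖ R with h | h
  · exact h.le.trans (le_max_left _ _)
  refine le_max_of_le_right ?_
  have hcoer := hR v (Y v) (by linarith) h
  rw [← hp.coe_toReal (hY v).1] at hcoer
  norm_cast at hcoer
  have hsub := hp.toReal_add_inner_le (hY v) (hY u).1
  have hcs : -rinn v (Y u) ≤ (‖u‖ + 1) * ‖Y u‖ :=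
    (neg_le_abs _).trans ((abs_real_inner_le_norm v (Y u)).trans
      (mul_le_mul_of_nonneg_right hv' (norm_nonneg _)))
  linarith [rinn_sub_right v (Y u) (Y v)]

theorem continuous_of_forall_mem_subdiff {C : Set (Euc d)} (hφ : PhiAssump φ C)
    {Y : Euc d → Euc d} (hY : ∀ v, v ∈ subdiff φ (Y v)) : Continuous Y := by
  refine continuous_iff_continuousAt.2 fun u => ?_
  obtain ⟨ρ, hρ⟩ := eventually_mem_closedBall_of_forall_mem_subdiff hφ.proper hφ.coercive hY u
  refine (isCompact_closedBall _ ρ).tendsto_nhds_of_unique_mapClusterPt hρ fun y _ hy => ?_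
  have hu : u ∈ subdiff φ y :=
    (isClosed_setOf_mem_subdiff hφ.proper hφ.lsc).mem_of_mapClusterPt
      (mapClusterPt_prodMk_of_mapClusterPt hy) (Eventually.of_forall hY)
  exact eq_of_mem_subdiff_of_mem_subdiff hφ.proper hφ.essstrict hφ.ri_eq.subset hu (hY u)

lemma rconj_eq_of_mem_subdiff_s4 (hp : ProperE φ) {v y : Euc d} (hv : v ∈ subdiff φ y) :
    rconj φ v = rinn v y - (φ y).toReal := by
  suffices econj φ v = ((rinn v y - (φ y).toReal : ℝ) : EReal) by
    rw [rconj, this, EReal.toReal_coe]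
  refine le_antisymm (iSup_le fun w => ?_) ?_
  · rcases eq_or_ne (φ w) ⊤ with hw | hw
    · simp [hw]
    rw [← hp.coe_toReal hw, ← EReal.coe_sub, EReal.coe_le_coe_iff]
    linarith [hp.toReal_add_inner_le hv hw, rinn_sub_right v w y]
  · rw [EReal.coe_sub, hp.coe_toReal hv.1]
    exact le_iSup (fun w => ((rinn v w : ℝ) : EReal) - φ w) y

lemma inner_sub_le_rconj_s4 (hp : ProperE φ) {v y w : Euc d} (hv : v ∈ subdiff φ y)
    (hw : φ w ≠ ⊤) : rinn v w - (φ w).toReal ≤ rconj φ v := by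
  rw [rconj_eq_of_mem_subdiff_s4 hp hv]
  linarith [hp.toReal_add_inner_le hv hw, rinn_sub_right v w y]

lemma abs_rconj_sub_sub_inner_le (hp : ProperE φ) {u v y y' : Euc d} (hu : u ∈ subdiff φ y)
    (hv : v ∈ subdiff φ y') :
    |rconj φ v - rconj φ u - rinn y (v - u)| ≤ ‖v - u‖ * ‖y' - y‖ := by
  have hlow := inner_sub_le_rconj_s4 hp hv hu.1
  have hupp := inner_sub_le_rconj_s4 hp hu hv.1
  rw [rconj_eq_of_mem_subdiff_s4 hp hu] at hupp ⊢
  rw [rconj_eq_of_mem_subdiff_s4 hp hv] at hlow ⊢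
  have hcs : rinn (v - u) (y' - y) ≤ ‖v - u‖ * ‖y' - y‖ := real_inner_le_norm _ _
  have hexp : rinn (v - u) (y' - y) = rinn v y' - rinn u y' - rinn v y + rinn u y := by
    simp only [rinn, inner_sub_left, inner_sub_right]; ring
  have hsym : rinn y (v - u) = rinn v y - rinn u y := by
    simp only [rinn, inner_sub_right, real_inner_comm]
  rw [abs_le]
  constructor <;> linarith [mul_nonneg (norm_nonneg (v - u)) (norm_nonneg (y' - y))]

theorem hasGradientAt_rconj {C : Set (Euc d)} (hφ : PhiAssump φ C) {u y : Euc d}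
    (hu : u ∈ subdiff φ y) : HasGradientAt (rconj φ) y u := by
  choose Y hY using exists_mem_subdiff hφ.proper hφ.lsc hφ.coercive
  have hYu : Y u = y :=
    eq_of_mem_subdiff_of_mem_subdiff hφ.proper hφ.essstrict hφ.ri_eq.subset (hY u) hu
  have hYc := (continuous_of_forall_mem_subdiff hφ hY).tendsto u
  rw [hYu] at hYc
  rw [hasGradientAt_iff_isLittleO, Asymptotics.isLittleO_iff]
  intro c hc
  filter_upwards [Metric.tendsto_nhds.1 hYc c hc] with v hv
  rw [dist_eq_norm] at hv
  calc ‖rconj φ v - rconj φ u - inner ℝ y (v - u)‖ ≤ ‖v - u‖ * ‖Y v - y‖ :=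
        abs_rconj_sub_sub_inner_le hφ.proper hu (hY v)
    _ ≤ c * ‖v - u‖ := by rw [mul_comm]; gcongr

end Conjugate

section NBKStep

variable {d n : ℕ} {φ : Euc d → EReal} {f : Fin n → Euc d → ℝ} {f' : Fin n → Euc d → Euc d}
  {i : Fin n} {x u : Euc d} {t : ℝ}

lemma hasDerivAt_lineObj {y : Euc d} (hy : HasGradientAt (rconj φ) y (u - t • f' i x)) :
    HasDerivAt (lineObj φ f f' i x u) (rinn (f' i x) x - f i x - rinn (f' i x) y) t := by
  have hline : HasDerivAt (fun s : ℝ => u - s • f' i x) (-f' i x) t := by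
    simpa using ((hasDerivAt_id t).smul_const (f' i x)).const_sub u
  have h := (hy.hasFDerivAt.comp_hasDerivAt t hline).add
    (hasDerivAt_mul_const (rinn (f' i x) x - f i x))
  refine h.congr_deriv ?_
  simp only [toDual_apply_apply, inner_neg_right, rinn, real_inner_comm]
  ring

theorem mem_linHyp_of_forall_lineObj_le {y : Euc d}
    (hy : HasGradientAt (rconj φ) y (u - t • f' i x))
    (ht : ∀ s, lineObj φ f f' i x u t ≤ lineObj φ f f' i x u s) : y ∈ linHyp f f' i x := by
  have h := IsLocalMin.hasDerivAt_eq_zero (Eventually.of_forall ht) (hasDerivAt_lineObj hy)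
  change f i x + rinn (f' i x) (y - x) = 0
  linarith [rinn_sub_right (f' i x) y x]

lemma mul_nonneg_of_lineObj_le_lineObj_zero (hp : ProperE φ) {y : Euc d}
    (hu : u ∈ subdiff φ x) (hy : u - t • f' i x ∈ subdiff φ y)
    (ht : lineObj φ f f' i x u t ≤ lineObj φ f f' i x u 0) : 0 ≤ t * f i x := by
  have hFY := inner_sub_le_rconj_s4 hp hy hu.1
  have h0 : lineObj φ f f' i x u 0 = rinn u x - (φ x).toReal := by
    simp [lineObj, rconj_eq_of_mem_subdiff_s4 hp hu]
  have hinner : rinn (u - t • f' i x) x = rinn u x - t * rinn (f' i x) x := by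
    simp only [rinn, inner_sub_left, real_inner_smul_left]
  rw [lineObj, h0] at ht
  linarith

end NBKStep

section Assumption2

variable {d n : ℕ}

lemma StrictStarConvexWith.starConvexWith {g : Euc d → ℝ} {g' : Euc d → Euc d}
    (hg : StrictStarConvexWith g g') : StarConvexWith g g' := by
  refine ⟨hg.1, fun x z hz => ?_⟩
  rcases eq_or_ne x z with rfl | hxz
  · simp [rinn]
  · exact (hg.2 x z hz hxz).le

lemma IsAffineF.add_inner_sub_eq {g : Euc d → ℝ} (hg : IsAffineF g) {a x : Euc d}
    (hga : HasGradientAt g a x) (y : Euc d) : g x + rinn a (y - x) = g y := by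
  obtain ⟨c, b, hcb⟩ := hg
  have hgc : HasGradientAt g c x := by
    rw [show g = fun w => inner ℝ c w + b from funext hcb, hasGradientAt_iff_hasFDerivAt]
    simpa using ((toDual ℝ (Euc d) c).hasFDerivAt (x := x)).add_const b
  rw [hga.unique hgc, hcb, hcb, rinn_sub_right]
  ring

theorem Assump2.mul_add_inner_sub_nonpos {φ : Euc d → EReal} {f : Fin n → Euc d → ℝ}
    {f' : Fin n → Euc d → Euc d} (hA2 : Assump2 φ f f') (i : Fin n) {x z : Euc d}
    (hx : HasGradientAt (f i) (f' i x) x) (hz : f i z = 0) :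
    f i x * (f i x + rinn (f' i x) (z - x)) ≤ 0 := by
  have of_starConvex (hnn : ∀ w, 0 ≤ f i w) (hsc : StarConvexWith (f i) (f' i)) :
      f i x * (f i x + rinn (f' i x) (z - x)) ≤ 0 :=
    mul_nonpos_of_nonneg_of_nonpos (hnn x) (hz ▸ hsc.2 x z fun w => hz ▸ hnn w)
  rcases hA2 i with ⟨hnn, hsc, -⟩ | ⟨hnn, hssc⟩ | haff
  · exact of_starConvex hnn hsc
  · exact of_starConvex hnn hssc.starConvexWith
  · rw [haff.add_inner_sub_eq hx, hz, mul_zero]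

end Assumption2

section Bregman

variable {d : ℕ} {φ : Euc d → EReal}

lemma breg_three_point (hp : ProperE φ) (u : Euc d) {v x y : Euc d}
    (hx : φ x ≠ ⊤) (hy : φ y ≠ ⊤) (z : Euc d) :
    breg φ v y z = breg φ u x z - breg φ u x y - (rinn (v - u) (z - y) : EReal) := by
  rw [breg, breg, breg, ← hp.coe_toReal hx, ← hp.coe_toReal hy]
  rcases eq_or_ne (φ z) ⊤ with hz | hz
  · simp only [hz, ← EReal.coe_sub, EReal.top_sub_coe]
  rw [← hp.coe_toReal hz]
  norm_cast
  simp only [rinn, inner_sub_left, inner_sub_right]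
  ring

lemma breg_sub_smul_le (hp : ProperE φ) {u x x' z a : Euc d}
    {r t : ℝ} (hx : φ x ≠ ⊤) (hx' : φ x' ≠ ⊤) (hlin : r + rinn a (x' - x) = 0)
    (hz : t * (r + rinn a (z - x)) ≤ 0) :
    breg φ (u - t • a) x' z ≤ breg φ u x z - breg φ u x x' := by
  have hinner : 0 ≤ rinn (u - t • a - u) (z - x') := by
    have hshift : rinn a (z - x') = r + rinn a (z - x) := by
      linarith [rinn_sub_right a z x', rinn_sub_right a z x, rinn_sub_right a x' x]
    have hstep : rinn (u - t • a - u) (z - x') = -(t * rinn a (z - x')) := by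
      simp only [sub_sub_cancel_left, rinn, inner_neg_left, real_inner_smul_left]
    rw [hstep, hshift]
    linarith
  rw [breg_three_point hp u hx hx']
  simpa using EReal.sub_le_sub le_rfl (EReal.coe_nonneg.2 hinner)

end Bregman

theorem statement4_general {d n : ℕ} (φ : Euc d → EReal) (C Dset : Set (Euc d))
    (f : Fin n → Euc d → ℝ) (f' : Fin n → Euc d → Euc d)
    (hφ : PhiAssump φ C) (hf : FAssump f f' Dset C)
    (hA2 : Assump2 φ f f')
    (x u : Euc d) (hu : u ∈ subdiff φ x)
    (i : Fin n) (hf0 : f i x ≠ 0)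
    (t : ℝ) (ht : ∀ s : ℝ, lineObj φ f f' i x u t ≤ lineObj φ f f' i x u s)
    (u' x' : Euc d) (hu' : u' = u - t • f' i x) (hx' : x' = gradconj φ u') :
    ∀ z ∈ solSet f C, breg φ u' x' z ≤ breg φ u x z - breg φ u x x' := by
  intro z hz
  obtain ⟨y, hy⟩ := exists_mem_subdiff hφ.proper hφ.lsc hφ.coercive u'
  have hgrad := hasGradientAt_rconj hφ hy
  obtain rfl : x' = y := hx'.trans hgrad.gradient
  subst hu'
  have hxD : x ∈ Dset := hf.CsubD (hφ.domC ▸ subset_closure ⟨u, hu⟩)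
  have hlin : f i x + rinn (f' i x) (x' - x) = 0 := mem_linHyp_of_forall_lineObj_le hgrad ht
  have hsign := mul_nonneg_of_lineObj_le_lineObj_zero hφ.proper hu hy (ht 0)
  have hres := hA2.mul_add_inner_sub_nonpos i (hf.grad i x hxD) (hz.2 i)
  have hdescent : t * (f i x + rinn (f' i x) (z - x)) ≤ 0 := by
    refine nonpos_of_mul_nonpos_left ?_ (mul_self_pos.2 hf0)
    calc _ = t * f i x * (f i x * (f i x + rinn (f' i x) (z - x))) := by ring
      _ ≤ 0 := mul_nonpos_of_nonneg_of_nonpos hsign hres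
  exact breg_sub_smul_le hφ.proper hu.1 hy.1 hlin hdescent

/-- stability of the NBK step in Bregman distance. -/
theorem statement4 {d n : ℕ} (φ : Euc d → EReal) (C Dset : Set (Euc d))
    (f : Fin n → Euc d → ℝ) (f' : Fin n → Euc d → Euc d)
    (hφ : PhiAssump φ C) (hf : FAssump f f' Dset C) (hS : (solSet f C).Nonempty)
    (hA2 : Assump2 φ f f')
    (x u : Euc d) (hu : u ∈ subdiff φ x)
    (i : Fin n) (hf0 : f i x ≠ 0) (hf'0 : f' i x ≠ 0)
    (t : ℝ) (ht : ∀ s : ℝ, lineObj φ f f' i x u t ≤ lineObj φ f f' i x u s)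
    (u' x' : Euc d) (hu' : u' = u - t • f' i x) (hx' : x' = gradconj φ u') :
    ∀ z ∈ solSet f C, breg φ u' x' z ≤ breg φ u x z - breg φ u x x' :=
  statement4_general φ C Dset f f' hφ hf hA2 x u hu i hf0 t ht u' x' hu' hx'
end
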